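/- For the hypersurface given by radial function ρ over ω ⊂ Sⁿ with reflection map γ, the normal component of γᵢ satisfies ⟨γᵢ, N⟩ = -(ρ^j/W_ρ) κ_{ji}, where ρ^j = e^{jk}ρ_k, W_ρ = √(ρ² + |∇ρ|²), and κ is the intensity form. -/

import Mathlib

open scoped RealInnerProductSpace

/-- Partial derivative of a map from parameter space `Fin n → ℝ` in the `i`-th
coordinate direction. -/
noncomputable def pd {n : ℕ} {F : Type*} [NormedAddCommGroup F] [NormedSpace ℝ F]
    (f : (Fin n → ℝ) → F) (u : Fin n → ℝ) (i : Fin n) : F :=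
  fderiv ℝ f u (Pi.single i 1)

/-!
Differentiating `γ = x - 2⟨x, N⟩N` and using `|N| = 1` gives
`⟨γᵢ, N⟩ = -⟨xᵢ, N⟩ - 2⟨x, Nᵢ⟩ = ρᵢ/W - 2⟨x, Nᵢ⟩`. On the other side `ρʲ eⱼᵢ = ρᵢ`, and by the
symmetry of the second fundamental form `ρʲ bⱼᵢ = -⟨ρʲ rⱼ, Nᵢ⟩`. Since
`ρʲ rⱼ = |∇ρ|² x + ρ ∇ρ = W² x - ρ W N` and `Nᵢ ⊥ N`, this equals `-W² ⟨x, Nᵢ⟩`.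
-/

open Set Matrix

section PartialDerivatives

variable {n : ℕ} {F : Type*} [NormedAddCommGroup F] [InnerProductSpace ℝ F]
  {ω : Set (Fin n → ℝ)} {u : Fin n → ℝ}

theorem pd_congr_of_eqOn {f g : (Fin n → ℝ) → F} (hω : IsOpen ω) (hu : u ∈ ω) (h : EqOn f g ω) :
    pd f u = pd g u := by
  ext1 i
  rw [pd, pd, (Filter.eventuallyEq_of_mem (hω.mem_nhds hu) h).fderiv_eq]

theorem pd_sub {f g : (Fin n → ℝ) → F} (hf : DifferentiableAt ℝ f u)
    (hg : DifferentiableAt ℝ g u) (i : Fin n) :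
    pd (fun w => f w - g w) u i = pd f u i - pd g u i := by
  rw [pd, fderiv_fun_sub hf hg]
  rfl

theorem pd_smul {c : (Fin n → ℝ) → ℝ} {f : (Fin n → ℝ) → F} (hc : DifferentiableAt ℝ c u)
    (hf : DifferentiableAt ℝ f u) (i : Fin n) :
    pd (fun w => c w • f w) u i = pd c u i • f u + c u • pd f u i := by
  rw [pd, fderiv_fun_smul hc hf, add_comm]
  rfl

theorem pd_inner {f g : (Fin n → ℝ) → F} (hf : DifferentiableAt ℝ f u)
    (hg : DifferentiableAt ℝ g u) (i : Fin n) :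
    pd (fun w => ⟪f w, g w⟫) u i = ⟪pd f u i, g u⟫ + ⟪f u, pd g u i⟫ := by
  rw [pd, fderiv_inner_apply (𝕜 := ℝ) hf hg, pd, pd, add_comm]

theorem inner_pd_eq_zero_of_norm_eqOn {f : (Fin n → ℝ) → F} {C : ℝ} (hω : IsOpen ω)
    (hu : u ∈ ω) (hf : DifferentiableAt ℝ f u) (h : ∀ v ∈ ω, ‖f v‖ = C) (i : Fin n) :
    ⟪pd f u i, f u⟫ = 0 := by
  have hconst : pd (fun w => ⟪f w, f w⟫) u i = pd (fun _ => C ^ 2) u i :=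
    congrFun (pd_congr_of_eqOn hω hu fun v hv => by simp [h v hv]) i
  rw [pd_inner hf hf, real_inner_comm (pd f u i)] at hconst
  simpa [pd] using hconst

theorem differentiableAt_pd {f : (Fin n → ℝ) → F} (hf : ContDiffAt ℝ 2 f u) (j : Fin n) :
    DifferentiableAt ℝ (fun w => pd f w j) u :=
  ((hf.fderiv_right (m := 1) le_rfl).differentiableAt one_ne_zero).clm_apply
    (differentiableAt_const _)

theorem pd_pd_comm {f : (Fin n → ℝ) → F} (hf : ContDiffAt ℝ 2 f u) (i j : Fin n) :
    pd (fun w => pd f w j) u i = pd (fun w => pd f w i) u j := by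
  have hf' : DifferentiableAt ℝ (fderiv ℝ f) u :=
    (hf.fderiv_right (m := 1) le_rfl).differentiableAt one_ne_zero
  simp only [pd, fderiv_clm_apply hf' (differentiableAt_const _)]
  simpa using hf.isSymmSndFDerivAt (by simp) (Pi.single i 1) (Pi.single j 1)

/-- Differentiating `⟪rⱼ, N⟫ = 0` turns `⟪rⱼ, Nᵢ⟫` into `-⟪rᵢⱼ, N⟫`, which is symmetric. -/
theorem inner_pd_pd_comm_of_inner_pd_eq_zero {r N : (Fin n → ℝ) → F} (hω : IsOpen ω)
    (hu : u ∈ ω) (hr : ContDiffAt ℝ 2 r u) (hN : DifferentiableAt ℝ N u)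
    (h : ∀ v ∈ ω, ∀ j, ⟪pd r v j, N v⟫ = 0) (i j : Fin n) :
    ⟪pd r u j, pd N u i⟫ = ⟪pd r u i, pd N u j⟫ := by
  have hderiv : ∀ i j, ⟪pd (fun w => pd r w j) u i, N u⟫ + ⟪pd r u j, pd N u i⟫ = 0 := by
    intro i j
    rw [← pd_inner (differentiableAt_pd hr j) hN,
      congrFun (pd_congr_of_eqOn hω hu fun v hv => h v hv j) i, pd, fderiv_const_apply]
    rfl
  have hij := hderiv i j
  rw [pd_pd_comm hr] at hij
  linarith [hderiv j i]

theorem inner_pd_reflection {f N : (Fin n → ℝ) → F} (hf : DifferentiableAt ℝ f u)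
    (hN : DifferentiableAt ℝ N u) (hNu : ‖N u‖ = 1) (i : Fin n) (hNi : ⟪pd N u i, N u⟫ = 0) :
    ⟪pd (fun w => f w - (2 * ⟪f w, N w⟫) • N w) u i, N u⟫
      = -⟪pd f u i, N u⟫ - 2 * ⟪f u, pd N u i⟫ := by
  have hc : DifferentiableAt ℝ (fun w => 2 * ⟪f w, N w⟫) u := (hf.inner ℝ hN).const_mul 2
  have hpd2 : pd (fun w => 2 * ⟪f w, N w⟫) u i = 2 * (⟪pd f u i, N u⟫ + ⟪f u, pd N u i⟫) := by
    rw [← pd_inner hf hN, pd, pd, fderiv_const_mul (hf.inner ℝ hN)]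
    rfl
  rw [pd_sub (g := fun w => (2 * ⟪f w, N w⟫) • N w) hf (hc.smul hN), pd_smul hc hN, hpd2,
    inner_sub_left, inner_add_left, real_inner_smul_left, real_inner_smul_left,
    real_inner_self_eq_norm_sq, hNu, hNi]
  ring

end PartialDerivatives

section GramDual

variable {E : Type*} [NormedAddCommGroup E] [InnerProductSpace ℝ E] {ι : Type*} [Fintype ι]
  [DecidableEq ι] {v : ι → E}

/-- Raising the index of `p` with the Gram matrix of `v`; for `v = ∂x` and `p = ∂ρ` this is the
gradient `∇ρ`. -/
noncomputable def gramDual (v : ι → E) (p : ι → ℝ) : E :=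
  ∑ i, (∑ j, (gram ℝ v)⁻¹ i j * p j) • v i

theorem inner_gramDual (hv : IsUnit (gram ℝ v).det) (p : ι → ℝ) (k : ι) :
    ⟪v k, gramDual v p⟫ = p k := by
  have h := congrFun (mulVec_mulVec p (gram ℝ v) (gram ℝ v)⁻¹) k
  rw [mul_nonsing_inv _ hv, one_mulVec] at h
  simpa [gramDual, inner_sum, real_inner_smul_right, mulVec, dotProduct, mul_comm] using h

theorem inner_gramDual_eq_zero {x : E} (hx : ∀ k, ⟪v k, x⟫ = 0) (p : ι → ℝ) :
    ⟪x, gramDual v p⟫ = 0 := by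
  rw [real_inner_comm]
  simp [gramDual, sum_inner, real_inner_smul_left, hx]

theorem norm_gramDual_sq (hv : IsUnit (gram ℝ v).det) (p : ι → ℝ) :
    ‖gramDual v p‖ ^ 2 = ∑ i, ∑ j, (gram ℝ v)⁻¹ i j * p i * p j := by
  rw [← real_inner_self_eq_norm_sq]
  nth_rewrite 1 [gramDual]
  simp only [sum_inner, real_inner_smul_left, inner_gramDual hv, Finset.sum_mul]
  exact Finset.sum_congr rfl fun i _ => Finset.sum_congr rfl fun j _ => by ring

theorem sum_gram_inv_mul_gram (hv : IsUnit (gram ℝ v).det) (p : ι → ℝ) (i : ι) :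
    ∑ j, (∑ k, (gram ℝ v)⁻¹ j k * p k) * gram ℝ v j i = p i := by
  rw [← inner_gramDual hv p i, real_inner_comm, gramDual, sum_inner]
  simp only [real_inner_smul_left, gram_apply]

end GramDual

/-- Pointwise data of a radial graph `r = ρ x` over the unit sphere: `v = ∂x` spans the tangent
space at `x`, `p = ∂ρ`, and `N = (ρ x - ∇ρ) / W` with `W = √(ρ² + |∇ρ|²)`. -/
structure IsRadialNormal {E ι : Type*} [NormedAddCommGroup E] [InnerProductSpace ℝ E]
    [Fintype ι] [DecidableEq ι] (x : E) (v : ι → E) (ρ : ℝ) (p : ι → ℝ) (W : ℝ) (N : E) :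
    Prop where
  norm_eq_one : ‖x‖ = 1
  inner_eq_zero : ∀ k, ⟪v k, x⟫ = 0
  isUnit_det : IsUnit (gram ℝ v).det
  ne_zero : ρ ≠ 0
  eq_sqrt : W = √(ρ ^ 2 + ‖gramDual v p‖ ^ 2)
  eq_smul : N = W⁻¹ • (ρ • x - gramDual v p)

namespace IsRadialNormal

variable {E : Type*} [NormedAddCommGroup E] [InnerProductSpace ℝ E] {ι : Type*} [Fintype ι]
  [DecidableEq ι] {x N : E} {v : ι → E} {ρ W : ℝ} {p : ι → ℝ}

theorem of_coord {G : E} {e : Matrix ι ι ℝ} (hx : ‖x‖ = 1) (hxv : ∀ k, ⟪v k, x⟫ = 0)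
    (he : ∀ i j, e i j = ⟪v i, v j⟫) (hdet : IsUnit e.det) (hρ : ρ ≠ 0)
    (hG : G = ∑ i, ∑ j, (e⁻¹ i j * p j) • v i)
    (hW : W = √(ρ ^ 2 + ∑ i, ∑ j, e⁻¹ i j * p i * p j)) (hN : N = W⁻¹ • (ρ • x - G)) :
    IsRadialNormal x v ρ p W N := by
  obtain rfl : e = gram ℝ v := Matrix.ext he
  have hG' : G = gramDual v p := by simp only [hG, gramDual, Finset.sum_smul]
  exact ⟨hx, hxv, hdet, hρ, by rw [hW, norm_gramDual_sq hdet], hG' ▸ hN⟩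

theorem W_pos (h : IsRadialNormal x v ρ p W N) : 0 < W :=
  h.eq_sqrt ▸ Real.sqrt_pos.2 (by have := h.ne_zero; positivity)

theorem sq_W (h : IsRadialNormal x v ρ p W N) : W ^ 2 = ρ ^ 2 + ‖gramDual v p‖ ^ 2 := by
  rw [h.eq_sqrt, Real.sq_sqrt (by positivity)]

theorem norm_normal (h : IsRadialNormal x v ρ p W N) : ‖N‖ = 1 := by
  have hsq : ‖ρ • x - gramDual v p‖ ^ 2 = W ^ 2 := by
    rw [norm_sub_sq_real, norm_smul, real_inner_smul_left, h.norm_eq_one,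
      inner_gramDual_eq_zero h.inner_eq_zero, Real.norm_eq_abs, mul_one, sq_abs, h.sq_W]
    ring
  rw [h.eq_smul, norm_smul, (pow_left_inj₀ (norm_nonneg _) h.W_pos.le two_ne_zero).1 hsq,
    norm_inv, Real.norm_of_nonneg h.W_pos.le, inv_mul_cancel₀ h.W_pos.ne']

theorem inner_normal (h : IsRadialNormal x v ρ p W N) (k : ι) : ⟪v k, N⟫ = -p k / W := by
  rw [h.eq_smul, real_inner_smul_right, inner_sub_right, real_inner_smul_right,
    h.inner_eq_zero, inner_gramDual h.isUnit_det]
  ring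

/-- The tangent vectors `rⱼ = ρⱼ x + ρ xⱼ` of the radial graph are orthogonal to `N`. -/
theorem inner_tangent_normal (h : IsRadialNormal x v ρ p W N) (j : ι) :
    ⟪p j • x + ρ • v j, N⟫ = 0 := by
  rw [inner_add_left, real_inner_smul_left, real_inner_smul_left, h.inner_normal, h.eq_smul,
    real_inner_smul_right, inner_sub_right, real_inner_smul_right, real_inner_self_eq_norm_sq,
    h.norm_eq_one, inner_gramDual_eq_zero h.inner_eq_zero]
  field_simp
  ring

theorem sum_mul_inner_tangent (h : IsRadialNormal x v ρ p W N) {m : E} (hm : ⟪m, N⟫ = 0) :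
    ∑ j, (∑ k, (gram ℝ v)⁻¹ j k * p k) * ⟪p j • x + ρ • v j, m⟫ = W ^ 2 * ⟪x, m⟫ := by
  have hGm : ⟪gramDual v p, m⟫ = ρ * ⟪x, m⟫ := by
    rw [h.eq_smul, real_inner_smul_right, inner_sub_right, real_inner_smul_right] at hm
    have := (mul_eq_zero.1 hm).resolve_left (inv_ne_zero h.W_pos.ne')
    rw [real_inner_comm m, real_inner_comm m x]
    linarith
  have hGG : ∑ j, (∑ k, (gram ℝ v)⁻¹ j k * p k) * p j = ‖gramDual v p‖ ^ 2 := by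
    rw [norm_gramDual_sq h.isUnit_det]
    exact Finset.sum_congr rfl fun j _ => by
      rw [Finset.sum_mul]; exact Finset.sum_congr rfl fun k _ => by ring
  have hGv : ⟪gramDual v p, m⟫ = ∑ j, (∑ k, (gram ℝ v)⁻¹ j k * p k) * ⟪v j, m⟫ := by
    simp only [gramDual, sum_inner, real_inner_smul_left]
  calc ∑ j, (∑ k, (gram ℝ v)⁻¹ j k * p k) * ⟪p j • x + ρ • v j, m⟫
      = (∑ j, (∑ k, (gram ℝ v)⁻¹ j k * p k) * p j) * ⟪x, m⟫ + ρ * ⟪gramDual v p, m⟫ := by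
        rw [hGv, Finset.sum_mul, Finset.mul_sum, ← Finset.sum_add_distrib]
        refine Finset.sum_congr rfl fun j _ => ?_
        rw [inner_add_left, real_inner_smul_left, real_inner_smul_left]
        ring
    _ = W ^ 2 * ⟪x, m⟫ := by rw [hGG, hGm, h.sq_W]; ring

end IsRadialNormal

theorem normal_component_of_reflected_derivative_general
    {n : ℕ}
    (ω : Set (Fin n → ℝ)) (hω : IsOpen ω)
    (x : (Fin n → ℝ) → EuclideanSpace ℝ (Fin (n + 1)))
    (ρ : (Fin n → ℝ) → ℝ)
    (r N γ gradρ : (Fin n → ℝ) → EuclideanSpace ℝ (Fin (n + 1)))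
    (W : (Fin n → ℝ) → ℝ)
    (e b κ : (Fin n → ℝ) → Matrix (Fin n) (Fin n) ℝ)
    (hx : ContDiffOn ℝ 2 x ω)
    (hρ : ContDiffOn ℝ 2 ρ ω)
    (hρpos : ∀ u ∈ ω, 0 < ρ u)
    (hxunit : ∀ u ∈ ω, ‖x u‖ = 1)
    (hr : ∀ u ∈ ω, r u = ρ u • x u)
    (he : ∀ u ∈ ω, ∀ i j, e u i j = ⟪pd x u i, pd x u j⟫)
    (heinv : ∀ u ∈ ω, IsUnit (e u).det)
    (hgrad : ∀ u ∈ ω, gradρ u = ∑ i, ∑ j, ((e u)⁻¹ i j * pd ρ u j) • pd x u i)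
    (hW : ∀ u ∈ ω,
      W u = Real.sqrt ((ρ u) ^ 2 + ∑ i, ∑ j, (e u)⁻¹ i j * pd ρ u i * pd ρ u j))
    (hN : ∀ u ∈ ω, N u = (W u)⁻¹ • (ρ u • x u - gradρ u))
    (hNsmooth : ContDiffOn ℝ 1 N ω)
    (hγ : ∀ u ∈ ω, γ u = x u - (2 * ⟪x u, N u⟫) • N u)
    (hb : ∀ u ∈ ω, ∀ i j, b u i j = -⟪pd r u j, pd N u i⟫)
    (hκ : ∀ u ∈ ω, ∀ i j, κ u i j = -(e u i j + (2 / W u) * b u i j)) :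
    ∀ u ∈ ω, ∀ i : Fin n,
      ⟪pd γ u i, N u⟫ =
        -∑ j, ((∑ k, (e u)⁻¹ j k * pd ρ u k) / W u) * κ u j i := by
  have hxd : ∀ v ∈ ω, DifferentiableAt ℝ x v := fun v hv =>
    (hx.differentiableOn two_ne_zero v hv).differentiableAt (hω.mem_nhds hv)
  have hρd : ∀ v ∈ ω, DifferentiableAt ℝ ρ v := fun v hv =>
    (hρ.differentiableOn two_ne_zero v hv).differentiableAt (hω.mem_nhds hv)
  have hNd : ∀ v ∈ ω, DifferentiableAt ℝ N v := fun v hv =>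
    (hNsmooth.differentiableOn one_ne_zero v hv).differentiableAt (hω.mem_nhds hv)
  have hR : ∀ v ∈ ω, IsRadialNormal (x v) (pd x v) (ρ v) (pd ρ v) (W v) (N v) := fun v hv =>
    .of_coord (hxunit v hv) (inner_pd_eq_zero_of_norm_eqOn hω hv (hxd v hv) hxunit) (he v hv)
      (heinv v hv) (hρpos v hv).ne' (hgrad v hv) (hW v hv) (hN v hv)
  have hpdr : ∀ v ∈ ω, ∀ j, pd r v j = pd ρ v j • x v + ρ v • pd x v j := fun v hv j => by
    rw [pd_congr_of_eqOn hω hv hr, pd_smul (hρd v hv) (hxd v hv)]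
  have htan : ∀ v ∈ ω, ∀ j, ⟪pd r v j, N v⟫ = 0 := fun v hv j =>
    hpdr v hv j ▸ (hR v hv).inner_tangent_normal j
  intro u hu i
  have hNi : ⟪pd N u i, N u⟫ = 0 :=
    inner_pd_eq_zero_of_norm_eqOn hω hu (hNd u hu) (fun v hv => (hR v hv).norm_normal) i
  have hrC : ContDiffAt ℝ 2 r u := ((hρ.contDiffAt (hω.mem_nhds hu)).smul
    (hx.contDiffAt (hω.mem_nhds hu))).congr_of_eventuallyEq
    (Filter.eventuallyEq_of_mem (hω.mem_nhds hu) hr)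
  have he' : e u = gram ℝ (pd x u) := Matrix.ext (he u hu)
  calc ⟪pd γ u i, N u⟫ = -⟪pd x u i, N u⟫ - 2 * ⟪x u, pd N u i⟫ := by
        rw [pd_congr_of_eqOn hω hu hγ]
        exact inner_pd_reflection (hxd u hu) (hNd u hu) (hR u hu).norm_normal i hNi
    _ = pd ρ u i / W u
          - 2 / W u ^ 2 * ∑ j, (∑ k, (e u)⁻¹ j k * pd ρ u k) * ⟪pd r u j, pd N u i⟫ := by
        simp only [(hR u hu).inner_normal, he', hpdr u hu]
        rw [(hR u hu).sum_mul_inner_tangent hNi]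
        field_simp [(hR u hu).W_pos.ne']
    _ = _ := by
        simp only [hκ u hu, hb u hu,
          ← inner_pd_pd_comm_of_inner_pd_eq_zero hω hu hrC (hNd u hu) htan i]
        rw [he', ← sum_gram_inv_mul_gram (hR u hu).isUnit_det (pd ρ u) i, Finset.sum_div,
          Finset.mul_sum, ← Finset.sum_sub_distrib, ← Finset.sum_neg_distrib]
        refine Finset.sum_congr rfl fun j _ => ?_
        ring

/-- The normal component of `γᵢ` satisfies
`⟨γᵢ, N⟩ = -(ρ^j/W_ρ) κ_{ji}`, where `ρ^j = e^{jk}ρ_k`, `W_ρ = √(ρ² + |∇ρ|²)`,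
and `κ_{ij} = -(e_{ij} + (2/W_ρ) b_{ij})` is the intensity form with
`b_{ij} = -⟨rⱼ, Nᵢ⟩` the second fundamental form. -/
theorem normal_component_of_reflected_derivative
    {n : ℕ}
    (ω : Set (Fin n → ℝ)) (hω : IsOpen ω)
    (x : (Fin n → ℝ) → EuclideanSpace ℝ (Fin (n + 1)))
    (ρ : (Fin n → ℝ) → ℝ)
    (r N γ gradρ : (Fin n → ℝ) → EuclideanSpace ℝ (Fin (n + 1)))
    (W : (Fin n → ℝ) → ℝ)
    (e g b κ : (Fin n → ℝ) → Matrix (Fin n) (Fin n) ℝ)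
    (hx : ContDiffOn ℝ 2 x ω)
    (hρ : ContDiffOn ℝ 2 ρ ω)
    (hρpos : ∀ u ∈ ω, 0 < ρ u)
    (hxunit : ∀ u ∈ ω, ‖x u‖ = 1)
    (hr : ∀ u ∈ ω, r u = ρ u • x u)
    (he : ∀ u ∈ ω, ∀ i j, e u i j = ⟪pd x u i, pd x u j⟫)
    (heinv : ∀ u ∈ ω, IsUnit (e u).det)
    (hg : ∀ u ∈ ω, ∀ i j, g u i j = ⟪pd r u i, pd r u j⟫)
    (hginv : ∀ u ∈ ω, IsUnit (g u).det)
    (hgrad : ∀ u ∈ ω, gradρ u = ∑ i, ∑ j, ((e u)⁻¹ i j * pd ρ u j) • pd x u i)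
    (hW : ∀ u ∈ ω,
      W u = Real.sqrt ((ρ u) ^ 2 + ∑ i, ∑ j, (e u)⁻¹ i j * pd ρ u i * pd ρ u j))
    (hN : ∀ u ∈ ω, N u = (W u)⁻¹ • (ρ u • x u - gradρ u))
    (hNsmooth : ContDiffOn ℝ 1 N ω)
    (hγ : ∀ u ∈ ω, γ u = x u - (2 * ⟪x u, N u⟫) • N u)
    (hb : ∀ u ∈ ω, ∀ i j, b u i j = -⟪pd r u j, pd N u i⟫)
    (hκ : ∀ u ∈ ω, ∀ i j, κ u i j = -(e u i j + (2 / W u) * b u i j)) :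
    ∀ u ∈ ω, ∀ i : Fin n,
      ⟪pd γ u i, N u⟫ =
        -∑ j, ((∑ k, (e u)⁻¹ j k * pd ρ u k) / W u) * κ u j i :=
  normal_component_of_reflected_derivative_general ω hω x ρ r N γ gradρ W e b κ hx hρ hρpos hxunit
    hr he heinv hgrad hW hN hNsmooth hγ hb hκ
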